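/- (Theorem 1, flip attack after watermark injection.) Suppose the attacker applies u^A_{t-1} = −u_{t-1} − φ_{t-1}, the plant evolves as y^A_t = A y^A_{t-1} + B u^A_{t-1} + w_{t-1}, and the estimator under attack is ŷ^A_t = A y^A_{t-1} − B u_{t-1} + B φ_{t-1}. Then the residual under attack satisfies the deterministic identity r^A_t = y^A_t − ŷ^A_t = −2 B φ_{t-1} + w_{t-1}; consequently, if w_{t-1} has the multivariate Gaussian law N(0, Q) on ℝⁿ, then r^A_t has law N(−2 B φ_{t-1}, Q). -/

import Mathlib

open MeasureTheory ProbabilityTheory Matrix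

open Classical in
/-- The multivariate Gaussian measure `N(m, S)` on `ℝⁿ`, defined (for positive
semidefinite `S`) as the pushforward of a product of standard Gaussians under the
affine map `z ↦ m + S^{1/2} z`; junk value `0` if `S` is not positive semidefinite. -/
noncomputable def multivariateGaussianFin {n : ℕ} (m : Fin n → ℝ)
    (S : Matrix (Fin n) (Fin n) ℝ) : Measure (Fin n → ℝ) :=
  if h : S.PosSemidef then
    Measure.map (fun z => m + (h.1.eigenvectorUnitary.1 * diagonal ((RCLike.ofReal : ℝ → ℝ) ∘ Real.sqrt ∘ h.1.eigenvalues) *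
        (star h.1.eigenvectorUnitary : Matrix (Fin n) (Fin n) ℝ)) *ᵥ z) (Measure.pi fun _ : Fin n => gaussianReal 0 1)
  else 0

/-- Unlike `AEMeasurable.map_map_of_aemeasurable`, no measurability of `f` is needed: if `f` is
not a.e.-measurable then neither is `g ∘ f`, and both sides are `0`. -/
theorem MeasurableEmbedding.map_comp {α β γ : Type*} [MeasurableSpace α] [MeasurableSpace β]
    [MeasurableSpace γ] {g : β → γ} (hg : MeasurableEmbedding g) (f : α → β) (μ : Measure α) :
    μ.map (g ∘ f) = (μ.map f).map g := by
  by_cases hf : AEMeasurable f μ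
  · exact (AEMeasurable.map_map_of_aemeasurable hg.measurable.aemeasurable hf).symm
  · rw [Measure.map_of_not_aemeasurable hf,
      Measure.map_of_not_aemeasurable (mt hg.aemeasurable_comp_iff.1 hf), Measure.map_zero]

theorem multivariateGaussianFin_map_const_add {n : ℕ} (v m : Fin n → ℝ)
    (S : Matrix (Fin n) (Fin n) ℝ) :
    (multivariateGaussianFin m S).map (v + ·) = multivariateGaussianFin (v + m) S := by
  unfold multivariateGaussianFin
  split_ifs
  · rw [Measure.map_map (measurable_const_add v) (by fun_prop)]
    simp only [Function.comp_def, add_assoc]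
  · exact Measure.map_zero _

theorem flip_attack_residual_eq {R ι κ ν : Type*} [CommRing R] [Fintype κ] [Fintype ν]
    (A : Matrix ι ν R) (B : Matrix ι κ R) (y : ν → R) (u φ : κ → R) (w : ι → R) :
    (A *ᵥ y + B *ᵥ (-u - φ) + w) - (A *ᵥ y - B *ᵥ u + B *ᵥ φ) = (-2 : R) • (B *ᵥ φ) + w := by
  rw [mulVec_sub, mulVec_neg]
  module

theorem flip_attack_after_watermark_residual_law_general
    {n c : ℕ} {Ω : Type*} [MeasurableSpace Ω] (P : Measure Ω)
    (A : Matrix (Fin n) (Fin n) ℝ) (B : Matrix (Fin n) (Fin c) ℝ)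
    (Q : Matrix (Fin n) (Fin n) ℝ)
    (u φ uA : Fin c → ℝ) (huA : uA = -u - φ)
    (yAprev w yA yhatA rA : Ω → Fin n → ℝ)
    (hy : ∀ ω, yA ω = A *ᵥ yAprev ω + B *ᵥ uA + w ω)
    (hyhat : ∀ ω, yhatA ω = A *ᵥ yAprev ω - B *ᵥ u + B *ᵥ φ)
    (hr : ∀ ω, rA ω = yA ω - yhatA ω)
    (hw : Measure.map w P = multivariateGaussianFin 0 Q) :
    (∀ ω, rA ω = (-2 : ℝ) • (B *ᵥ φ) + w ω) ∧
      Measure.map rA P = multivariateGaussianFin ((-2 : ℝ) • (B *ᵥ φ)) Q := by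
  have hres : ∀ ω, rA ω = (-2 : ℝ) • (B *ᵥ φ) + w ω := fun ω => by
    rw [hr, hy, hyhat, huA, flip_attack_residual_eq]
  refine ⟨hres, ?_⟩
  rw [show rA = ((-2 : ℝ) • (B *ᵥ φ) + ·) ∘ w from funext hres,
    (measurableEmbedding_addLeft _).map_comp, hw, multivariateGaussianFin_map_const_add, add_zero]

/-- **Theorem 1: flip attack after watermark injection.**
If the attacker applies `u^A_{t-1} = −u_{t-1} − φ_{t-1}`, the plant evolves as
`y^A_t = A y^A_{t-1} + B u^A_{t-1} + w_{t-1}`, and the estimator under attack is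
`ŷ^A_t = A y^A_{t-1} − B u_{t-1} + B φ_{t-1}`, then the residual satisfies
`r^A_t = −2 B φ_{t-1} + w_{t-1}`; consequently, if `w_{t-1} ∼ N(0, Q)` then
`r^A_t ∼ N(−2 B φ_{t-1}, Q)`. -/
theorem flip_attack_after_watermark_residual_law
    {n c : ℕ} {Ω : Type*} [MeasurableSpace Ω] (P : Measure Ω)
    (A : Matrix (Fin n) (Fin n) ℝ) (B : Matrix (Fin n) (Fin c) ℝ)
    (Q : Matrix (Fin n) (Fin n) ℝ) (hQ : Q.PosSemidef)
    (u φ uA : Fin c → ℝ) (huA : uA = -u - φ)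
    (yAprev w yA yhatA rA : Ω → Fin n → ℝ)
    (hy : ∀ ω, yA ω = A *ᵥ yAprev ω + B *ᵥ uA + w ω)
    (hyhat : ∀ ω, yhatA ω = A *ᵥ yAprev ω - B *ᵥ u + B *ᵥ φ)
    (hr : ∀ ω, rA ω = yA ω - yhatA ω)
    (hw : Measure.map w P = multivariateGaussianFin 0 Q) :
    (∀ ω, rA ω = (-2 : ℝ) • (B *ᵥ φ) + w ω) ∧
      Measure.map rA P = multivariateGaussianFin ((-2 : ℝ) • (B *ᵥ φ)) Q :=
  flip_attack_after_watermark_residual_law_general P A B Q u φ uA huA yAprev w yA yhatA rA hy hyhat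
    hr hw
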